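/- arXiv:2511.03660 — 2 statements merged into one kernel-verified Lean document; each statement's English description precedes it below -/
import Mathlib

section
/- Let G be a finite directed acyclic graph with vertex set V, a set of shocked vertices T ⊆ V, and suppose every directed path from a source vertex (no incoming edges) to a sink vertex (no outgoing edges) passes through at least one vertex of T. Define r : V → [0,1] by: r(v) = 1 if v is a source not in T; r(v) = λ if v ∈ T; and otherwise r(v) = min over in-neighbors u of r(u). Then r(v) = λ for every sink vertex v. -/
theorem stmt_7 (V : Type) [Fintype V]
    (E : V → V → Prop) (hacyc : WellFounded E)
    (T : Set V) (lam : ℝ) (hlam0 : 0 ≤ lam) (hlam1 : lam < 1)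
    (hcut : ∀ l : List V, l ≠ [] → l.Chain' (fun a b => E a b) →
      (∀ p, l.head? = some p → ∀ u, ¬ E u p) →
      (∀ q, l.getLast? = some q → ∀ w, ¬ E q w) →
      ∃ v ∈ l, v ∈ T)
    (r : V → ℝ)
    (hT : ∀ v ∈ T, r v = lam)
    (hsource : ∀ v, v ∉ T → (∀ u, ¬ E u v) → r v = 1)
    (hmin : ∀ v, v ∉ T → (∃ u, E u v) →
      (∃ u, E u v ∧ r v = r u) ∧ (∀ u, E u v → r v ≤ r u)) :
    ∀ v, (∀ w, ¬ E v w) → r v = lam := by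
  have L : ∀ v : V, ∀ l : List V, (v :: l).Chain' (fun a b => E a b) →
      (∀ q, (v :: l).getLast? = some q → ∀ w, ¬ E q w) →
      (∀ x ∈ l, x ∉ T ∧ r x = r v) → r v = lam := by
    intro v
    refine hacyc.induction (C := fun v => ∀ l : List V, (v :: l).Chain' (fun a b => E a b) →
      (∀ q, (v :: l).getLast? = some q → ∀ w, ¬ E q w) →
      (∀ x ∈ l, x ∉ T ∧ r x = r v) → r v = lam) v ?_
    intro v ih l hchain hsink htail
    by_cases hvT : v ∈ T
    · exact hT v hvT
    by_cases hsrc : ∃ u, E u v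
    · obtain ⟨u, huv, hru⟩ := (hmin v hvT hsrc).1
      have hres : r u = lam := by
        refine ih u huv (v :: l) (List.isChain_cons_cons.mpr ⟨huv, hchain⟩) ?_ ?_
        · intro q hq
          rw [List.getLast?_cons_cons] at hq
          exact hsink q hq
        · intro x hx
          rcases List.mem_cons.mp hx with rfl | hx
          · exact ⟨hvT, hru⟩
          · exact ⟨(htail x hx).1, (htail x hx).2.trans hru⟩
      exact hru.trans hres
    · push_neg at hsrc
      obtain ⟨w, hwmem, hwT⟩ := hcut (v :: l) (by simp) hchain
        (by intro p hp u; simp only [List.head?_cons, Option.some.injEq] at hp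
            subst hp; exact hsrc u) hsink
      rcases List.mem_cons.mp hwmem with rfl | hwl
      · exact absurd hwT hvT
      · exact absurd hwT (htail w hwl).1
  intro v hv
  exact L v [] (List.isChain_singleton v) (by intro q hq; simp only [List.getLast?_singleton, Option.some.injEq] at hq; subst hq; exact hv) (by simp)
end

section
/- Let G be a finite directed graph (possibly with cycles) on vertex set V with a 'good' labeling g : V → M, such that all vertices producing the same good have in-neighborhoods covering the same set of goods (no technological diversity), and the shocked set T ⊆ V is a union of complete good-classes (industry-wide shocks: if v ∈ T and g(w) = g(v) then w ∈ T). Define the disruption fraction iteratively: all vertices in T have fraction λ, and any vertex with an input good all of whose producers have fraction ≤ λ has fraction ≤ λ. Then every vertex reachable by a directed path from T has disruption fraction exactly λ (given fractions are also bounded below by λ). -/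
theorem stmt_8 (V M : Type) [Fintype V] [DecidableEq V] [DecidableEq M]
    (E : V → V → Prop) [DecidableRel E]
    (g : V → M)
    (x : V → V → ℝ) (hx : ∀ u v, E u v → 0 < x u v)
    (hnodiv : ∀ v w, g v = g w →
      ∀ m : M, (∃ u, E u v ∧ g u = m) ↔ (∃ u, E u w ∧ g u = m))
    (T : Set V)
    (hind : ∀ v ∈ T, ∀ w, g w = g v → w ∈ T)
    (lam : ℝ) (hlam0 : 0 ≤ lam) (hlam1 : lam < 1)
    (f : V → ℝ)
    (hfb : ∀ v, lam ≤ f v ∧ f v ≤ 1)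
    (hfT : ∀ v ∈ T, f v = lam)
    (hfsource : ∀ v, v ∉ T → (∀ u, ¬ E u v) → f v = 1)
    (hfrec : ∀ v, v ∉ T → (∃ u, E u v) →
      ((∃ m : M, (∃ u, E u v ∧ g u = m) ∧
          f v * (∑ u ∈ Finset.univ.filter (fun u => E u v ∧ g u = m), x u v)
            = ∑ u ∈ Finset.univ.filter (fun u => E u v ∧ g u = m), f u * x u v) ∧
       (∀ m : M, (∃ u, E u v ∧ g u = m) →
          f v * (∑ u ∈ Finset.univ.filter (fun u => E u v ∧ g u = m), x u v)
            ≤ ∑ u ∈ Finset.univ.filter (fun u => E u v ∧ g u = m), f u * x u v))) :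
    ∀ v, (∃ t ∈ T, Relation.ReflTransGen E t v) → f v = lam := by
  rintro v ⟨t, ht, hpath⟩
  suffices h : ∀ w, g w = g v → f w = lam by exact h v rfl
  induction hpath with
  | refl => exact fun w hw => hfT w (hind t ht w hw)
  | @tail b c hab hbc ih =>
    intro w hw
    by_cases hwT : w ∈ T
    · exact hfT w hwT
    · -- w has an input of good g b
      have hex : ∃ u, E u w ∧ g u = g b := by
        have := (hnodiv c w hw.symm (g b)).mp ⟨b, hbc, rfl⟩
        exact this
      obtain ⟨u0, hu0E, hu0g⟩ := hex
      obtain ⟨-, hle⟩ := hfrec w hwT ⟨u0, hu0E⟩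
      have hle := hle (g b) ⟨u0, hu0E, hu0g⟩
      set s := Finset.univ.filter (fun u => E u w ∧ g u = g b) with hs
      have hu0s : u0 ∈ s := by simp [hs, hu0E, hu0g]
      have hSpos : 0 < ∑ u ∈ s, x u w := by
        apply Finset.sum_pos
        · intro u hu
          rw [hs, Finset.mem_filter] at hu
          exact hx u w hu.2.1
        · exact ⟨u0, hu0s⟩
      have hsum : ∑ u ∈ s, f u * x u w = lam * ∑ u ∈ s, x u w := by
        rw [Finset.mul_sum]
        apply Finset.sum_congr rfl
        intro u hu
        rw [hs, Finset.mem_filter] at hu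
        rw [ih u hu.2.2]
      rw [hsum] at hle
      have hfle : f w ≤ lam := le_of_mul_le_mul_right hle hSpos
      exact le_antisymm hfle (hfb w).1
end
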